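/- Let 0 < H ≤ 1/2, R(s,t) = (1/2)(s^{2H} + t^{2H} - |s-t|^{2H}), and k < l positive integers. Then for any partitions k-1 = s_0 < ... < s_N = k of [k-1,k] and l-1 = t_0 < ... < t_M = l of [l-1,l], one has ∑_{i=1}^N ∑_{j=1}^M |R([s_{i-1},s_i]×[t_{j-1},t_j])|^{1/(2H)} ≤ |ρ_H(l-k)|^{1/(2H)}, where ρ_H(v) = (1/2)(|v+1|^{2H}+|v-1|^{2H}-2|v|^{2H}). -/

import Mathlib

/-- Covariance function of fractional Brownian motion with Hurst parameter `H`. -/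
noncomputable def fbmCov (H s t : ℝ) : ℝ :=
  (1/2) * (s ^ (2*H) + t ^ (2*H) - |s - t| ^ (2*H))

/-- Rectangular increment of a two-variable function. -/
def rectIncr (R : ℝ → ℝ → ℝ) (s s' t t' : ℝ) : ℝ :=
  R s' t' - R s t' - R s' t + R s t

/-- `ρ_H(v) = (1/2)(|v+1|^{2H} + |v-1|^{2H} - 2|v|^{2H})`. -/
noncomputable def rhoH (H v : ℝ) : ℝ :=
  (1/2) * (|v + 1| ^ (2*H) + |v - 1| ^ (2*H) - 2 * |v| ^ (2*H))

/-! For `u ≤ v ≤ x ≤ y` the rectangular increment of `R` over `[u,v] × [x,y]` equals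
`(g(y-u) + g(x-v) - g(y-v) - g(x-u)) / 2` with `g = (·) ^ (2H)`, which is `≤ 0` because `g` is
concave for `2H ≤ 1`. So all increments over the grid cells of `[k-1,k] × [l-1,l]` have the same
sign, their absolute values add up to the absolute increment over the whole square, which is
`|ρ_H(l-k)|`, and `∑ |aᵢ| ^ p ≤ (∑ |aᵢ|) ^ p` for `p = 1/(2H) ≥ 1` concludes. -/

open Finset

theorem Real.sum_rpow_le_rpow_sum {ι : Type*} (s : Finset ι) {f : ι → ℝ} {p : ℝ} (hp : 1 ≤ p)
    (hf : ∀ i ∈ s, 0 ≤ f i) : ∑ i ∈ s, f i ^ p ≤ (∑ i ∈ s, f i) ^ p := by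
  induction s using Finset.cons_induction with
  | empty => simp [Real.zero_rpow (by positivity : p ≠ 0)]
  | cons a s _ ih =>
    rw [forall_mem_cons] at hf
    rw [sum_cons, sum_cons]
    calc f a ^ p + ∑ i ∈ s, f i ^ p ≤ f a ^ p + (∑ i ∈ s, f i) ^ p := by gcongr; exact ih hf.2
      _ ≤ (f a + ∑ i ∈ s, f i) ^ p := Real.add_rpow_le_rpow_add hf.1 (sum_nonneg hf.2) hp

theorem Finset.abs_sum_of_nonpos {ι : Type*} {s : Finset ι} {f : ι → ℝ}
    (hf : ∀ i ∈ s, f i ≤ 0) : |∑ i ∈ s, f i| = ∑ i ∈ s, |f i| := by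
  rw [abs_of_nonpos (sum_nonpos hf), ← sum_neg_distrib]
  exact sum_congr rfl fun i hi => (abs_of_nonpos (hf i hi)).symm

theorem Fin.sum_succ_sub_castSucc {G : Type*} [AddCommGroup G] {n : ℕ} (f : Fin (n + 1) → G) :
    ∑ i : Fin n, (f i.succ - f i.castSucc) = f (Fin.last n) - f 0 := by
  induction n with
  | zero => simp
  | succ n ih =>
    rw [Fin.sum_univ_castSucc]
    simp only [Fin.succ_castSucc]
    rw [ih fun i => f i.castSucc]
    simp only [Fin.succ_last, Fin.castSucc_zero]
    abel

theorem ConcaveOn.map_add_map_le_of_add_eq {s : Set ℝ} {f : ℝ → ℝ} (hf : ConcaveOn ℝ s f)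
    {a b c d : ℝ} (ha : a ∈ s) (hd : d ∈ s) (hab : a ≤ b) (hbd : b ≤ d) (hsum : a + d = b + c) :
    f a + f d ≤ f b + f c := by
  rcases hab.eq_or_lt with rfl | hab
  · rw [show c = d by linarith]
  have had : 0 < d - a := by linarith
  -- `b` and `c` are the convex combinations of `a` and `d` with swapped weights.
  set μ := (b - a) / (d - a)
  have hμ : 0 ≤ μ := by positivity
  have hμ' : 0 ≤ 1 - μ := by rw [one_sub_div had.ne']; exact div_nonneg (by linarith) had.le
  have eb : (1 - μ) • a + μ • d = b := by simp only [smul_eq_mul, μ]; field_simp; ring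
  have ec : μ • a + (1 - μ) • d = c := by
    simp only [smul_eq_mul, μ]; field_simp; linear_combination (d - a) * hsum
  have hb := hf.2 ha hd hμ' hμ (by ring)
  have hc := hf.2 ha hd hμ hμ' (by ring)
  rw [eb] at hb
  rw [ec] at hc
  simp only [smul_eq_mul] at hb hc
  linarith

theorem rectIncr_fbmCov (H a b c d : ℝ) :
    rectIncr (fbmCov H) a b c d
      = (|d - a| ^ (2*H) + |c - b| ^ (2*H) - |d - b| ^ (2*H) - |c - a| ^ (2*H)) / 2 := by
  simp only [rectIncr, fbmCov, abs_sub_comm a, abs_sub_comm b]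
  ring

theorem rectIncr_fbmCov_sub_one (H a b : ℝ) :
    rectIncr (fbmCov H) (a - 1) a (b - 1) b = rhoH H (b - a) := by
  rw [rectIncr_fbmCov, rhoH]
  ring_nf

theorem rectIncr_fbmCov_nonpos {H a b c d : ℝ} (hH0 : 0 ≤ H) (hH : H ≤ 1/2)
    (hab : a ≤ b) (hbc : b ≤ c) (hcd : c ≤ d) :
    rectIncr (fbmCov H) a b c d ≤ 0 := by
  have := (Real.concaveOn_rpow (p := 2 * H) (by linarith) (by linarith)).map_add_map_le_of_add_eq
    (a := c - b) (b := d - b) (c := c - a) (d := d - a) (sub_nonneg.2 hbc)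
    (Set.mem_Ici.2 (by linarith)) (by linarith) (by linarith) (by ring)
  rw [rectIncr_fbmCov, abs_of_nonneg (by linarith : 0 ≤ d - a),
    abs_of_nonneg (by linarith : 0 ≤ c - b), abs_of_nonneg (by linarith : 0 ≤ d - b),
    abs_of_nonneg (by linarith : 0 ≤ c - a)]
  linarith

theorem sum_rectIncr_grid (R : ℝ → ℝ → ℝ) {N M : ℕ} (s : Fin (N + 1) → ℝ) (t : Fin (M + 1) → ℝ) :
    ∑ i : Fin N, ∑ j : Fin M, rectIncr R (s i.castSucc) (s i.succ) (t j.castSucc) (t j.succ)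
      = rectIncr R (s 0) (s (Fin.last N)) (t 0) (t (Fin.last M)) := by
  have hcol (a b : ℝ) : ∑ j : Fin M, rectIncr R a b (t j.castSucc) (t j.succ)
      = rectIncr R a b (t 0) (t (Fin.last M)) :=
    (sum_congr rfl fun j _ => by simp only [rectIncr]; ring).trans
      ((Fin.sum_succ_sub_castSucc fun j => R b (t j) - R a (t j)).trans (by simp only [rectIncr]; ring))
  simp only [hcol]
  exact (sum_congr rfl fun i _ => by simp only [rectIncr]; ring).trans
    ((Fin.sum_succ_sub_castSucc fun i => R (s i) (t (Fin.last M)) - R (s i) (t 0)).trans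
      (by simp only [rectIncr]; ring))

theorem fbmCov_variation_offdiagonal_general (H : ℝ) (hH0 : 0 < H) (hH : H ≤ 1/2)
    (k l : ℕ) (hkl : k < l) (N M : ℕ)
    (s : Fin (N+1) → ℝ) (t : Fin (M+1) → ℝ)
    (hsmono : Monotone s) (htmono : Monotone t)
    (hs0 : s 0 = (k : ℝ) - 1) (hsN : s (Fin.last N) = (k : ℝ))
    (ht0 : t 0 = (l : ℝ) - 1) (htM : t (Fin.last M) = (l : ℝ)) :
    ∑ i : Fin N, ∑ j : Fin M,
      |rectIncr (fbmCov H) (s i.castSucc) (s i.succ) (t j.castSucc) (t j.succ)|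
        ^ (1/(2*H))
      ≤ |rhoH H ((l : ℝ) - (k : ℝ))| ^ (1/(2*H)) := by
  set a : Fin N × Fin M → ℝ := fun x =>
    rectIncr (fbmCov H) (s x.1.castSucc) (s x.1.succ) (t x.2.castSucc) (t x.2.succ)
  have hp : 1 ≤ 1 / (2 * H) := by rw [le_div_iff₀ (by positivity)]; linarith
  have ha_nonpos (x : Fin N × Fin M) : a x ≤ 0 := by
    refine rectIncr_fbmCov_nonpos hH0.le hH (hsmono x.1.castSucc_le_succ) ?_
      (htmono x.2.castSucc_le_succ)
    calc s x.1.succ ≤ s (Fin.last N) := hsmono (Fin.le_last _)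
      _ ≤ t 0 := by rw [hsN, ht0, le_sub_iff_add_le]; exact_mod_cast hkl
      _ ≤ t x.2.castSucc := htmono (Fin.zero_le _)
  have ha_sum : ∑ x, a x = rhoH H (l - k) := by
    rw [Fintype.sum_prod_type, sum_rectIncr_grid, hs0, hsN, ht0, htM, rectIncr_fbmCov_sub_one]
  calc ∑ i : Fin N, ∑ j : Fin M, |a (i, j)| ^ (1 / (2 * H))
      = ∑ x, |a x| ^ (1 / (2 * H)) := (Fintype.sum_prod_type fun x => |a x| ^ (1 / (2 * H))).symm
    _ ≤ (∑ x, |a x|) ^ (1 / (2 * H)) :=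
      Real.sum_rpow_le_rpow_sum _ hp fun x _ => abs_nonneg _
    _ = |rhoH H (l - k)| ^ (1 / (2 * H)) := by
      rw [← ha_sum, abs_sum_of_nonpos fun x _ => ha_nonpos x]

/-- For `0 < H ≤ 1/2` and positive integers `k < l`: for any partitions of
`[k-1,k]` and `[l-1,l]`, the sum of the `1/(2H)`-powers of the absolute
rectangular increments of the fBm covariance is bounded by
`|ρ_H(l-k)|^{1/(2H)}`. -/
theorem fbmCov_variation_offdiagonal (H : ℝ) (hH0 : 0 < H) (hH : H ≤ 1/2)
    (k l : ℕ) (hk : 1 ≤ k) (hkl : k < l) (N M : ℕ)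
    (s : Fin (N+1) → ℝ) (t : Fin (M+1) → ℝ)
    (hsmono : Monotone s) (htmono : Monotone t)
    (hs0 : s 0 = (k : ℝ) - 1) (hsN : s (Fin.last N) = (k : ℝ))
    (ht0 : t 0 = (l : ℝ) - 1) (htM : t (Fin.last M) = (l : ℝ)) :
    ∑ i : Fin N, ∑ j : Fin M,
      |rectIncr (fbmCov H) (s i.castSucc) (s i.succ) (t j.castSucc) (t j.succ)|
        ^ (1/(2*H))
      ≤ |rhoH H ((l : ℝ) - (k : ℝ))| ^ (1/(2*H)) :=
  fbmCov_variation_offdiagonal_general H hH0 hH k l hkl N M s t hsmono htmono hs0 hsN ht0 htM
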